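/- Let α be a limit ordinal and for each limit δ ≤ α fix a strictly increasing ω-sequence ρ_δ : ω → δ converging to δ. Let Γ ⊆ ω^{<ω} be a tree with ⟨⟩ ∈ Γ such that every η ∈ Γ has infinitely many immediate successors η⌢⟨n⟩ ∈ Γ. Define g : Γ → α+1 by recursion: g(⟨⟩) = α; if g(η) = β + 1 and η⌢⟨ℓ⟩ ∈ Γ then g(η⌢⟨ℓ⟩) = β; if g(η) = δ is a limit ordinal and η⌢⟨ℓ⟩ ∈ Γ then g(η⌢⟨ℓ⟩) = ρ_δ(ℓ); if g(η) = 0 and η⌢⟨ℓ⟩ ∈ Γ then g(η⌢⟨ℓ⟩) = α. Then for every n < ω, the set A_n = {η ∈ Γ : g(η) = α and |{ℓ < length(η) : g(η↾ℓ) = α}| = n} is a front of Γ: every infinite branch of Γ has exactly one initial segment in A_n. -/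

import Mathlib

/-- Restriction of a branch `x : ℕ → ℕ` to length `m`, as a finite sequence. -/
def res (x : ℕ → ℕ) (m : ℕ) : List ℕ := List.ofFn fun i : Fin m => x i

/-- The `n`-th front `A_n` determined by the rank function `g` on the tree `Γ`:
nodes where `g` takes the value `α`, the value `α` having occurred exactly `n`
times at proper initial segments. -/
def Aset (Γ : Set (List ℕ)) (g : List ℕ → Ordinal) (α : Ordinal) (n : ℕ) :
    Set (List ℕ) :=
  {η | η ∈ Γ ∧ g η = α ∧ {ℓ : ℕ | ℓ < η.length ∧ g (η.take ℓ) = α}.ncard = n}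

/-!
Along a branch `x`, the ranks `g (res x m)` never exceed `α` and strictly decrease as long as
they are nonzero, while a `0` is followed by `α`. By well-foundedness of the ordinals the
sequence hits `0` infinitely often, so the positions where it equals `α` form an infinite set of
naturals. A node `res x m` lies in `A_n` exactly when `m` is such a position with `n` earlier
ones, i.e. when `m` is the `n`-th of them (`Nat.nth`).
-/

open Filter

theorem frequently_atTop_of_not_imp_lt {β : Type*} [Preorder β] [WellFoundedLT β]
    {f : ℕ → β} {P : ℕ → Prop} (h : ∀ m, ¬P m → f (m + 1) < f m) : ∃ᶠ m in atTop, P m := by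
  rw [frequently_atTop]
  intro a
  by_contra! hP
  exact not_strictAnti_of_wellFoundedLT (fun j => f (a + j))
    (strictAnti_nat_of_succ_lt fun j => h _ (hP _ (Nat.le_add_right a j)))

theorem Nat.existsUnique_count_eq_of_infinite {p : ℕ → Prop} [DecidablePred p]
    (hp : {m | p m}.Infinite) (n : ℕ) : ∃! m, p m ∧ Nat.count p m = n :=
  ⟨Nat.nth p n, ⟨Nat.nth_mem_of_infinite hp n, Nat.count_nth_of_infinite hp n⟩,
    fun _ ⟨hm, hcount⟩ => hcount ▸ (Nat.nth_count hm).symm⟩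

section RankSequence

variable {α : Ordinal} {f : ℕ → Ordinal}

theorem le_of_reset_of_lt (h0 : f 0 = α) (hzero : ∀ m, f m = 0 → f (m + 1) = α)
    (hlt : ∀ m, f m ≠ 0 → f m ≤ α → f (m + 1) < f m) (m : ℕ) : f m ≤ α := by
  induction m with
  | zero => exact h0.le
  | succ m ih =>
    by_cases hm : f m = 0
    · exact (hzero m hm).le
    · exact (hlt m hm ih).le.trans ih

theorem infinite_setOf_eq_of_reset_of_lt (h0 : f 0 = α)
    (hzero : ∀ m, f m = 0 → f (m + 1) = α)
    (hlt : ∀ m, f m ≠ 0 → f m ≤ α → f (m + 1) < f m) : {m | f m = α}.Infinite := by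
  have hle := le_of_reset_of_lt h0 hzero hlt
  have hzeros : ∃ᶠ m in atTop, f m = 0 :=
    frequently_atTop_of_not_imp_lt fun m hm => hlt m hm (hle m)
  rw [← Nat.frequently_atTop_iff_infinite, frequently_atTop]
  intro a
  obtain ⟨b, hab, hb⟩ := frequently_atTop.1 hzeros a
  exact ⟨b + 1, hab.trans b.le_succ, hzero b hb⟩

end RankSequence

theorem length_res (x : ℕ → ℕ) (m : ℕ) : (res x m).length = m := by
  simp [res]

theorem res_succ (x : ℕ → ℕ) (m : ℕ) : res x (m + 1) = res x m ++ [x m] := by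
  rw [res, List.ofFn_succ']
  simp [res, List.concat_eq_append]

theorem take_res (x : ℕ → ℕ) {ℓ m : ℕ} (h : ℓ ≤ m) : (res x m).take ℓ = res x ℓ :=
  List.ext_getElem (by simp [res, h]) (by simp [res])

theorem ncard_setOf_take_res (x : ℕ → ℕ) (P : List ℕ → Prop) [DecidablePred P] (m : ℕ) :
    {ℓ | ℓ < (res x m).length ∧ P ((res x m).take ℓ)}.ncard =
      Nat.count (fun ℓ => P (res x ℓ)) m := by
  rw [Nat.count_eq_card_filter_range, ← Set.ncard_coe_finset]
  congr 1
  ext ℓ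
  simp only [length_res, Set.mem_ofPred_eq, Finset.coe_filter, Finset.mem_range]
  exact and_congr_right fun hℓ => by rw [take_res x hℓ.le]

theorem rank_res_succ_lt {α : Ordinal} {ρ : Ordinal → ℕ → Ordinal}
    (hρ : ∀ δ ≤ α, Order.IsSuccLimit δ →
      StrictMono (ρ δ) ∧ (∀ n, ρ δ n < δ) ∧ ∀ β < δ, ∃ n, β < ρ δ n)
    {Γ : Set (List ℕ)} {g : List ℕ → Ordinal}
    (hgsucc : ∀ η ∈ Γ, ∀ ℓ : ℕ, η ++ [ℓ] ∈ Γ →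
      ∀ β, g η = β + 1 → g (η ++ [ℓ]) = β)
    (hglim : ∀ η ∈ Γ, ∀ ℓ : ℕ, η ++ [ℓ] ∈ Γ →
      Order.IsSuccLimit (g η) → g (η ++ [ℓ]) = ρ (g η) ℓ)
    {x : ℕ → ℕ} (hx : ∀ m, res x m ∈ Γ) (m : ℕ) (hm0 : g (res x m) ≠ 0)
    (hmα : g (res x m) ≤ α) : g (res x (m + 1)) < g (res x m) := by
  have hmem_succ : res x m ++ [x m] ∈ Γ := res_succ x m ▸ hx (m + 1)
  rw [res_succ]
  rcases Ordinal.zero_or_succ_or_isSuccLimit (g (res x m)) with h | ⟨β, hβ⟩ | h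
  · exact absurd h hm0
  · rw [hgsucc _ (hx m) _ hmem_succ β (hβ.symm.trans (Order.succ_eq_add_one β)), ← hβ]
    exact Order.lt_succ β
  · rw [hglim _ (hx m) _ hmem_succ h]
    exact (hρ _ hmα h).2.1 _

theorem stmt9_general (α : Ordinal)
    (ρ : Ordinal → ℕ → Ordinal)
    (hρ : ∀ δ ≤ α, Order.IsSuccLimit δ →
      StrictMono (ρ δ) ∧ (∀ n, ρ δ n < δ) ∧ ∀ β < δ, ∃ n, β < ρ δ n)
    (Γ : Set (List ℕ))
    (g : List ℕ → Ordinal)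
    (hg0 : g [] = α)
    (hgsucc : ∀ η ∈ Γ, ∀ ℓ : ℕ, η ++ [ℓ] ∈ Γ →
      ∀ β, g η = β + 1 → g (η ++ [ℓ]) = β)
    (hglim : ∀ η ∈ Γ, ∀ ℓ : ℕ, η ++ [ℓ] ∈ Γ →
      Order.IsSuccLimit (g η) → g (η ++ [ℓ]) = ρ (g η) ℓ)
    (hgzero : ∀ η ∈ Γ, ∀ ℓ : ℕ, η ++ [ℓ] ∈ Γ → g η = 0 → g (η ++ [ℓ]) = α)
    (n : ℕ) :
    ∀ x : ℕ → ℕ, (∀ m : ℕ, res x m ∈ Γ) →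
      ∃! m : ℕ, res x m ∈ Aset Γ g α n := by
  intro x hx
  have hzero (m : ℕ) (h : g (res x m) = 0) : g (res x (m + 1)) = α := by
    rw [res_succ]
    exact hgzero _ (hx m) _ (res_succ x m ▸ hx (m + 1)) h
  have hinf := infinite_setOf_eq_of_reset_of_lt (f := fun m => g (res x m)) hg0 hzero
    (rank_res_succ_lt hρ hgsucc hglim hx)
  refine (existsUnique_congr fun m => ?_).2 (Nat.existsUnique_count_eq_of_infinite hinf n)
  rw [Aset, Set.mem_ofPred_eq, ncard_setOf_take_res x (g · = α)]
  exact and_iff_right (hx m)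

theorem stmt9 (α : Ordinal) (hα : Order.IsSuccLimit α)
    (ρ : Ordinal → ℕ → Ordinal)
    (hρ : ∀ δ ≤ α, Order.IsSuccLimit δ →
      StrictMono (ρ δ) ∧ (∀ n, ρ δ n < δ) ∧ ∀ β < δ, ∃ n, β < ρ δ n)
    (Γ : Set (List ℕ)) (hnil : ([] : List ℕ) ∈ Γ)
    (hclosed : ∀ σ τ : List ℕ, σ <+: τ → τ ∈ Γ → σ ∈ Γ)
    (hsplit : ∀ η ∈ Γ, {m : ℕ | η ++ [m] ∈ Γ}.Infinite)
    (g : List ℕ → Ordinal)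
    (hg0 : g [] = α)
    (hgsucc : ∀ η ∈ Γ, ∀ ℓ : ℕ, η ++ [ℓ] ∈ Γ →
      ∀ β, g η = β + 1 → g (η ++ [ℓ]) = β)
    (hglim : ∀ η ∈ Γ, ∀ ℓ : ℕ, η ++ [ℓ] ∈ Γ →
      Order.IsSuccLimit (g η) → g (η ++ [ℓ]) = ρ (g η) ℓ)
    (hgzero : ∀ η ∈ Γ, ∀ ℓ : ℕ, η ++ [ℓ] ∈ Γ → g η = 0 → g (η ++ [ℓ]) = α)
    (n : ℕ) :
    ∀ x : ℕ → ℕ, (∀ m : ℕ, res x m ∈ Γ) →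
      ∃! m : ℕ, res x m ∈ Aset Γ g α n :=
  stmt9_general α ρ hρ Γ g hg0 hgsucc hglim hgzero n
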